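/- Let u and v be words of length at least k − 1 over a finite alphabet A such that |u|_t = |v|_t for every word t of length k. If |u|_s = |v|_s for every word s of length k − 1, then u and v have the same prefix of length k − 1 and the same suffix of length k − 1. -/
import Mathlib


/-- Number of occurrences of `x` as a factor of `w`. -/
def occ {A : Type*} [DecidableEq A] (w x : List A) : ℕ :=
  ((List.range (w.length + 1)).filter (fun i => decide (x <+: w.drop i))).length

/-- `k`-Abelian equivalence. -/
def KAbEq {A : Type*} [DecidableEq A] (k : ℕ) (u v : List A) : Prop :=
  ∀ x : List A, x ≠ [] → x.length ≤ k → occ u x = occ v x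

open List

lemma occ_cons {A : Type*} [DecidableEq A] (b : A) (w x : List A) :
    occ (b :: w) x = (if x <+: (b :: w) then 1 else 0) + occ w x := by
  unfold occ
  rw [← List.countP_eq_length_filter, ← List.countP_eq_length_filter]
  show (List.range (w.length + 1 + 1)).countP _ = _
  rw [List.range_succ_eq_map, List.countP_cons, List.countP_map]
  simp only [Function.comp_def, List.drop_succ_cons, List.drop_zero, decide_eq_true_eq]
  split_ifs <;> omega

lemma occ_nil {A : Type*} [DecidableEq A] (x : List A) :
    occ ([] : List A) x = if x = [] then 1 else 0 := by
  simp only [occ, List.length_nil, List.range_succ, List.range_zero, List.nil_append,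
    List.drop_nil, List.prefix_nil]
  split_ifs with h <;> simp [h, List.filter]

lemma sum_ite_unique {A : Type*} [Fintype A] (Q : A → Prop) [DecidablePred Q]
    (h : ∀ a a', Q a → Q a' → a = a') :
    (∑ a : A, if Q a then 1 else 0) = if ∃ a, Q a then 1 else 0 := by
  by_cases he : ∃ a, Q a
  · obtain ⟨a, ha⟩ := he
    rw [if_pos ⟨a, ha⟩, Finset.sum_eq_single a]
    · simp [ha]
    · intro a' _ hne
      simp only [ite_eq_right_iff]
      intro h'; exact absurd (h a' a h' ha) hne
    · simp
  · rw [if_neg he]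
    apply Finset.sum_eq_zero
    intro a _
    simp only [ite_eq_right_iff]
    intro ha; exact absurd ⟨a, ha⟩ he

lemma occ_split_cons {A : Type*} [Fintype A] [DecidableEq A] (w s : List A) :
    occ w s = (if s <+: w then 1 else 0) + ∑ a : A, occ w (a :: s) := by
  induction w with
  | nil => simp [occ_nil, List.prefix_nil]
  | cons b w ih =>
    rw [occ_cons, ih]
    simp_rw [occ_cons]
    rw [Finset.sum_add_distrib]
    have hs : (∑ a : A, if (a :: s) <+: (b :: w) then 1 else 0)
        = if s <+: w then 1 else 0 := by
      rw [sum_ite_unique (fun a => (a :: s) <+: (b :: w))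
        (fun a a' h h' => by
          simp only [List.cons_prefix_cons] at h h'; exact h.1.trans h'.1.symm)]
      simp [List.cons_prefix_cons]
    rw [hs]

lemma occ_split_snoc {A : Type*} [Fintype A] [DecidableEq A] (w s : List A) :
    occ w s = (if s <:+ w then 1 else 0) + ∑ a : A, occ w (s ++ [a]) := by
  induction w with
  | nil => simp [occ_nil, List.suffix_nil]
  | cons b w ih =>
    rw [occ_cons, ih]
    simp_rw [occ_cons]
    rw [Finset.sum_add_distrib]
    have hs : (∑ a : A, if (s ++ [a]) <+: (b :: w) then 1 else 0)
        = if (s <+: (b :: w) ∧ s ≠ b :: w) then 1 else 0 := by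
      rw [sum_ite_unique (fun a => (s ++ [a]) <+: (b :: w))
        (fun a a' h h' => by
          rcases List.prefix_of_prefix_length_le h h' (by simp) with h''
          have := h''.eq_of_length (by simp)
          simpa using this)]
      congr 1
      apply propext
      constructor
      · rintro ⟨a, ha⟩
        refine ⟨(List.prefix_append s [a]).trans ha, ?_⟩
        intro h; subst h
        have := ha.length_le
        simp at this
      · rintro ⟨⟨r, hr⟩, hne⟩
        cases r with
        | nil => exact absurd (by simpa using hr) hne
        | cons a r' => exact ⟨a, r', by simpa using hr⟩
    rw [hs]
    by_cases h1 : s = b :: w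
    · subst h1
      have h2 : ¬ ((b :: w) <:+ w) := fun h => by have := h.length_le; simp at this
      simp [h2]
    · have h3 : (s <:+ b :: w) ↔ (s <:+ w) := by
        rw [List.suffix_cons_iff]; simp [h1]
      simp only [h3, h1, ne_eq, not_false_iff, and_true]
      ring

theorem stmt4 {A : Type*} [Fintype A] [DecidableEq A] (k : ℕ) (hk : 1 ≤ k)
    (u v : List A) (hu : k - 1 ≤ u.length) (hv : k - 1 ≤ v.length)
    (hfk : ∀ t : List A, t.length = k → occ u t = occ v t)
    (hfk1 : ∀ s : List A, s.length = k - 1 → occ u s = occ v s) :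
    u.take (k - 1) = v.take (k - 1) ∧
      u.drop (u.length - (k - 1)) = v.drop (v.length - (k - 1)) := by
  have key : ∀ s : List A, s.length = k - 1 →
      ((s <+: u ↔ s <+: v) ∧ (s <:+ u ↔ s <:+ v)) := by
    intro s hs
    have hsum1 : ∀ a : A, occ u (a :: s) = occ v (a :: s) := fun a =>
      hfk (a :: s) (by simp [hs]; omega)
    have hsum2 : ∀ a : A, occ u (s ++ [a]) = occ v (s ++ [a]) := fun a =>
      hfk (s ++ [a]) (by simp [hs]; omega)
    have h1 := occ_split_cons u s
    have h2 := occ_split_cons v s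
    have h3 := occ_split_snoc u s
    have h4 := occ_split_snoc v s
    have h5 := hfk1 s hs
    rw [Finset.sum_congr rfl (fun a _ => hsum1 a)] at h1
    rw [Finset.sum_congr rfl (fun a _ => hsum2 a)] at h3
    constructor
    · by_cases p1 : s <+: u <;> by_cases p2 : s <+: v <;>
        simp only [p1, p2, if_true, if_false, iff_true, iff_false] at h1 h2 ⊢ <;> omega
    · by_cases p1 : s <:+ u <;> by_cases p2 : s <:+ v <;>
        simp only [p1, p2, if_true, if_false, iff_true, iff_false] at h3 h4 ⊢ <;> omega
  constructor
  · have hlen : (u.take (k - 1)).length = k - 1 := by simp [hu]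
    have hpv : u.take (k - 1) <+: v := ((key _ hlen).1).mp (List.take_prefix _ _)
    have := List.prefix_iff_eq_take.mp hpv
    rw [hlen] at this
    exact this
  · have hlen : (u.drop (u.length - (k - 1))).length = k - 1 := by simp; omega
    have hpv : u.drop (u.length - (k - 1)) <:+ v := ((key _ hlen).2).mp (List.drop_suffix _ _)
    have := List.suffix_iff_eq_drop.mp hpv
    rw [hlen] at this
    exact this
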